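/- arXiv:2211.16969 — 2 statements merged into one kernel-verified Lean document; each statement's English description precedes it below -/
import Mathlib

section
/- Let r = 1/√2 and θ ∈ ℝ. If a sequence (x_n) of reals satisfies x_{n+1} = cos(θ)·x_n² + sin(θ)·x_{n-1}² for all n ≥ 0, and |x_{-1}| ≤ r and |x_0| ≤ r, then |x_n| ≤ r for all n ≥ -1. -/
/-!
Both squares `x_n², x_{n-1}²` are at most `r²`, so by Cauchy–Schwarz with `cos² θ + sin² θ = 1`
the next term is bounded by `√(x_n⁴ + x_{n-1}⁴) ≤ √2 r²`, which is at most `r` exactly when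
`r ≤ 1/√2`. Hence the ball of radius `1/√2` is invariant under the two-step recurrence.
-/

theorem forall_mem_of_two_step_rec {α : Type*} {S : Set α} {f : α → α → α} {x : ℕ → α}
    (hf : ∀ a ∈ S, ∀ b ∈ S, f a b ∈ S) (hrec : ∀ n, x (n + 2) = f (x (n + 1)) (x n))
    (h0 : x 0 ∈ S) (h1 : x 1 ∈ S) (n : ℕ) : x n ∈ S := by
  have hpair : ∀ n, x n ∈ S ∧ x (n + 1) ∈ S := fun n =>
    Nat.rec ⟨h0, h1⟩ (fun n ih => ⟨ih.2, hrec n ▸ hf _ ih.2 _ ih.1⟩) n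
  exact (hpair n).1

theorem abs_mul_add_mul_le_sqrt {c s : ℝ} (hcs : c ^ 2 + s ^ 2 = 1) (u v : ℝ) :
    |c * u + s * v| ≤ √(u ^ 2 + v ^ 2) :=
  Real.abs_le_sqrt (by nlinarith [sq_nonneg (c * v - s * u)])

theorem abs_cos_mul_sq_add_sin_mul_sq_le (θ : ℝ) {r a b : ℝ} (hr : √2 * r ≤ 1)
    (ha : |a| ≤ r) (hb : |b| ≤ r) :
    |Real.cos θ * a ^ 2 + Real.sin θ * b ^ 2| ≤ r := by
  have ha2 : a ^ 2 ≤ r ^ 2 := sq_le_sq' (abs_le.mp ha).1 (abs_le.mp ha).2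
  have hb2 : b ^ 2 ≤ r ^ 2 := sq_le_sq' (abs_le.mp hb).1 (abs_le.mp hb).2
  have hr0 : 0 ≤ r := (abs_nonneg a).trans ha
  calc |Real.cos θ * a ^ 2 + Real.sin θ * b ^ 2|
      ≤ √((a ^ 2) ^ 2 + (b ^ 2) ^ 2) :=
        abs_mul_add_mul_le_sqrt (by rw [add_comm]; exact Real.sin_sq_add_cos_sq θ) _ _
    _ ≤ √(2 * (r ^ 2) ^ 2) := by gcongr; nlinarith [sq_nonneg a, sq_nonneg b]
    _ = √2 * r * r := by rw [Real.sqrt_mul zero_le_two, Real.sqrt_sq (by positivity)]; ring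
    _ ≤ r := by nlinarith

/-- If `x (n+2) = cos θ * (x (n+1))^2 + sin θ * (x n)^2` (with `x 0, x 1` playing the
roles of `x₋₁, x₀`) and the initial values have absolute value at most `1/√2`,
then the whole sequence stays in the ball of radius `1/√2`. -/
theorem stmt0 (θ : ℝ) (x : ℕ → ℝ)
    (hrec : ∀ n : ℕ, x (n + 2) = Real.cos θ * (x (n + 1)) ^ 2 + Real.sin θ * (x n) ^ 2)
    (h0 : |x 0| ≤ 1 / Real.sqrt 2) (h1 : |x 1| ≤ 1 / Real.sqrt 2) :
    ∀ n : ℕ, |x n| ≤ 1 / Real.sqrt 2 := by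
  have hr : √2 * (1 / √2) ≤ 1 := by rw [mul_one_div_cancel (by positivity)]
  exact forall_mem_of_two_step_rec (S := {a | |a| ≤ 1 / √2})
    (fun a ha b hb => abs_cos_mul_sq_add_sin_mul_sq_le θ hr ha hb) hrec h0 h1
end

section
/- Let a, b ≥ 0 with a + b > 0 and let x* = 1/(a + b). If (x_n) satisfies x_{n+1} = a·x_n² + b·x_{n-1}² with 0 ≤ x_{-1} < x* and 0 ≤ x_0 < x*, then x_n < x* for all n, and moreover x_n ≤ M^(2^⌊n/2⌋)·x* where M = max(x_{-1}, x_0)/x* < 1; in particular x_n → 0. -/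
/-!
With `s = 1/(a+b)` we have `(a+b)·(t·s)² = t²·s`, so if two consecutive terms are at most
`t·s` (with `0 ≤ t ≤ 1`) then so are the next two, with `t` replaced by `t²`. Starting from
`t = M` this bounds `x n` by `M ^ 2 ^ (n / 2) · s`, which tends to `0` doubly exponentially.
-/

open Filter Topology

lemma mul_sq_add_mul_sq_le {a b u v c : ℝ} (ha : 0 ≤ a) (hb : 0 ≤ b) (hu : 0 ≤ u)
    (huc : u ≤ c) (hv : 0 ≤ v) (hvc : v ≤ c) : a * u ^ 2 + b * v ^ 2 ≤ (a + b) * c ^ 2 :=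
  calc a * u ^ 2 + b * v ^ 2 ≤ a * c ^ 2 + b * c ^ 2 := by gcongr
    _ = (a + b) * c ^ 2 := by ring

lemma tendsto_pow_two_pow_div_two_atTop_nhds_zero {M : ℝ} (hM0 : 0 ≤ M) (hM1 : M < 1) :
    Tendsto (fun n : ℕ => M ^ 2 ^ (n / 2)) atTop (𝓝 0) :=
  (tendsto_pow_atTop_nhds_zero_of_lt_one hM0 hM1).comp <|
    (tendsto_pow_atTop_atTop_of_one_lt one_lt_two).comp (Nat.tendsto_div_const_atTop two_ne_zero)

section QuadraticRecurrence

variable {a b : ℝ} {x : ℕ → ℝ}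

lemma quadRec_nonneg (ha : 0 ≤ a) (hb : 0 ≤ b)
    (hrec : ∀ n, x (n + 2) = a * x (n + 1) ^ 2 + b * x n ^ 2) (h0 : 0 ≤ x 0) (h1 : 0 ≤ x 1) :
    ∀ n, 0 ≤ x n :=
  Nat.twoStepInduction h0 h1 fun n _ _ => hrec n ▸ by positivity

lemma quadRec_le_sq_mul (ha : 0 ≤ a) (hb : 0 ≤ b)
    (hrec : ∀ n, x (n + 2) = a * x (n + 1) ^ 2 + b * x n ^ 2) {s t : ℝ} (hs : (a + b) * s = 1)
    {n : ℕ} (hn : 0 ≤ x n) (hn1 : 0 ≤ x (n + 1)) (hxn : x n ≤ t * s) (hxn1 : x (n + 1) ≤ t * s) :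
    x (n + 2) ≤ t ^ 2 * s :=
  calc x (n + 2) = a * x (n + 1) ^ 2 + b * x n ^ 2 := hrec n
    _ ≤ (a + b) * (t * s) ^ 2 := mul_sq_add_mul_sq_le ha hb hn1 hxn1 hn hxn
    _ = t ^ 2 * s * ((a + b) * s) := by ring
    _ = t ^ 2 * s := by rw [hs, mul_one]

lemma quadRec_pair_le_sq_mul (ha : 0 ≤ a) (hb : 0 ≤ b)
    (hrec : ∀ n, x (n + 2) = a * x (n + 1) ^ 2 + b * x n ^ 2) (hnn : ∀ n, 0 ≤ x n)
    {s t : ℝ} (hs0 : 0 ≤ s) (hs : (a + b) * s = 1) (ht0 : 0 ≤ t) (ht1 : t ≤ 1) {n : ℕ}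
    (hxn : x n ≤ t * s) (hxn1 : x (n + 1) ≤ t * s) :
    x (n + 2) ≤ t ^ 2 * s ∧ x (n + 3) ≤ t ^ 2 * s := by
  have hxn2 : x (n + 2) ≤ t ^ 2 * s :=
    quadRec_le_sq_mul ha hb hrec hs (hnn n) (hnn (n + 1)) hxn hxn1
  have hsq : t ^ 2 * s ≤ t * s :=
    mul_le_mul_of_nonneg_right (pow_le_of_le_one ht0 ht1 two_ne_zero) hs0
  exact ⟨hxn2, quadRec_le_sq_mul ha hb hrec hs (hnn _) (hnn _) hxn1 (hxn2.trans hsq)⟩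

lemma quadRec_le_pow_two_pow_div_two_mul (ha : 0 ≤ a) (hb : 0 ≤ b)
    (hrec : ∀ n, x (n + 2) = a * x (n + 1) ^ 2 + b * x n ^ 2) (hnn : ∀ n, 0 ≤ x n)
    {s M : ℝ} (hs0 : 0 ≤ s) (hs : (a + b) * s = 1) (hM0 : 0 ≤ M) (hM1 : M ≤ 1)
    (hx0 : x 0 ≤ M * s) (hx1 : x 1 ≤ M * s) (n : ℕ) :
    x n ≤ M ^ 2 ^ (n / 2) * s := by
  have hpair : ∀ m, x (2 * m) ≤ M ^ 2 ^ m * s ∧ x (2 * m + 1) ≤ M ^ 2 ^ m * s := by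
    intro m
    induction m with
    | zero => simpa using ⟨hx0, hx1⟩
    | succ m ih =>
      rw [pow_succ, pow_mul]
      exact quadRec_pair_le_sq_mul ha hb hrec hnn hs0 hs (by positivity) (pow_le_one₀ hM0 hM1)
        ih.1 ih.2
  obtain ⟨m, rfl | rfl⟩ := Nat.even_or_odd' n
  · simpa using (hpair m).1
  · simpa [Nat.mul_add_div] using (hpair m).2

end QuadraticRecurrence

theorem stmt9 (a b : ℝ) (ha : 0 ≤ a) (hb : 0 ≤ b) (hab : 0 < a + b) (x : ℕ → ℝ)
    (hrec : ∀ n : ℕ, x (n + 2) = a * (x (n + 1)) ^ 2 + b * (x n) ^ 2)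
    (h0 : 0 ≤ x 0) (h0' : x 0 < 1 / (a + b))
    (h1 : 0 ≤ x 1) (h1' : x 1 < 1 / (a + b)) :
    (∀ n : ℕ, x n < 1 / (a + b)) ∧
      max (x 0) (x 1) / (1 / (a + b)) < 1 ∧
      (∀ n : ℕ, x (n + 1) ≤ (max (x 0) (x 1) / (1 / (a + b))) ^ (2 ^ (n / 2)) * (1 / (a + b))) ∧
      Tendsto x atTop (𝓝 0) := by
  set s := 1 / (a + b)
  have hs0 : 0 < s := by positivity
  have hs : (a + b) * s = 1 := mul_one_div_cancel hab.ne'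
  set M := max (x 0) (x 1) / s
  have hM0 : 0 ≤ M := div_nonneg (le_max_of_le_left h0) hs0.le
  have hM1 : M < 1 := (div_lt_one hs0).mpr (max_lt h0' h1')
  have hMs : M * s = max (x 0) (x 1) := div_mul_cancel₀ _ hs0.ne'
  have hnn := quadRec_nonneg ha hb hrec h0 h1
  have hbound := quadRec_le_pow_two_pow_div_two_mul ha hb hrec hnn hs0.le hs hM0 hM1.le
    (hMs ▸ le_max_left _ _) (hMs ▸ le_max_right _ _)
  refine ⟨fun n => (hbound n).trans_lt ?_, hM1, fun n => (hbound (n + 1)).trans ?_, ?_⟩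
  · exact mul_lt_of_lt_one_left hs0 (pow_lt_one₀ hM0 hM1 (by positivity))
  · exact mul_le_mul_of_nonneg_right (pow_le_pow_of_le_one hM0 hM1.le
      (Nat.pow_le_pow_right two_pos (Nat.div_le_div_right n.le_succ))) hs0.le
  · refine squeeze_zero hnn hbound ?_
    simpa using (tendsto_pow_two_pow_div_two_atTop_nhds_zero hM0 hM1).mul_const s
end
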